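/- Let F be an outer function in QA (i.e., F ∈ VMOA ∩ H^∞) and I an inner function, with ∥F∥_∞ = 1 and |F| nonconstant on T. Then IF is G-extremal if and only if there exists a sequence {z_n} ⊂ D with |F(z_n)| → 1 and I(z_n) → 0. -/

import Mathlib

open MeasureTheory Complex Real Filter Topology
open scoped ENNReal

/-- Normalized arc-length measure on the circle, parametrized by angle θ ∈ (0, 2π]. -/
noncomputable def circleM : Measure ℝ :=
  (ENNReal.ofReal (2 * Real.pi))⁻¹ • (volume.restrict (Set.Ioc 0 (2 * Real.pi)))

/-- Poisson kernel (density of harmonic measure ω_z w.r.t. circleM) at the boundary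
point with angle θ. -/
noncomputable def pk (z : ℂ) (θ : ℝ) : ℝ :=
  (1 - ‖z‖ ^ 2) / ‖Complex.exp (θ * Complex.I) - z‖ ^ 2

/-- Poisson integral of a complex boundary function. -/
noncomputable def poissonInt (f : ℝ → ℂ) (z : ℂ) : ℂ :=
  ∫ θ, (pk z θ : ℂ) * f θ ∂circleM

/-- Poisson integral of a real boundary function. -/
noncomputable def poissonIntR (u : ℝ → ℝ) (z : ℂ) : ℝ :=
  ∫ θ, pk z θ * u θ ∂circleM

/-- Φ_f(z) = P(|f|²)(z) - |Pf(z)|². -/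
noncomputable def Phi (f : ℝ → ℂ) (z : ℂ) : ℝ :=
  (∫ θ, pk z θ * ‖f θ‖ ^ 2 ∂circleM) - ‖poissonInt f z‖ ^ 2

/-- The open unit disk. -/
def unitDisk : Set ℂ := Metric.ball 0 1

/-- The Garsia norm ‖f‖_G = sup_{z ∈ 𝔻} Φ_f(z)^{1/2}, valued in ℝ≥0∞. -/
noncomputable def garsiaNorm (f : ℝ → ℂ) : ℝ≥0∞ :=
  ⨆ z : unitDisk, ENNReal.ofReal (Real.sqrt (Phi f (z : ℂ)))

lemma twopi_pos : (0:ℝ) < 2 * π := by positivity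

instance circleM_prob : IsProbabilityMeasure circleM := by
  constructor
  rw [circleM]
  simp [Measure.restrict_apply, Real.volume_Ioc]
  rw [ENNReal.inv_mul_cancel]
  · simp [twopi_pos, Real.pi_pos, ne_of_gt]
  · finiteness

lemma integral_circleM (f : ℝ → ℝ) :
    ∫ θ, f θ ∂circleM = (2*π)⁻¹ * ∫ θ in Set.Ioc 0 (2*π), f θ := by
  rw [circleM, integral_smul_measure, ENNReal.toReal_inv, ENNReal.toReal_ofReal twopi_pos.le,
    smul_eq_mul]

lemma abs_w (θ : ℝ) : ‖Complex.exp (θ * Complex.I)‖ = 1 := by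
  simpa using Complex.norm_exp_ofReal_mul_I θ

lemma w_sub_lb {z : ℂ} (θ : ℝ) : 1 - ‖z‖ ≤ ‖Complex.exp (θ * Complex.I) - z‖ := by
  have := norm_sub_norm_le (Complex.exp (θ * Complex.I)) z
  simp only [abs_w] at this
  linarith [this]

lemma w_sub_pos {z : ℂ} (hz : ‖z‖ < 1) (θ : ℝ) :
    0 < ‖Complex.exp (θ * Complex.I) - z‖ :=
  lt_of_lt_of_le (by linarith) (w_sub_lb θ)

lemma w_sub_ne {z : ℂ} (hz : ‖z‖ < 1) (θ : ℝ) :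
    Complex.exp (θ * Complex.I) - z ≠ 0 :=
  norm_pos_iff.mp (w_sub_pos hz θ)

lemma pk_re {z : ℂ} (hz : ‖z‖ < 1) (θ : ℝ) :
    pk z θ = ((Complex.exp (θ * Complex.I) + z) / (Complex.exp (θ * Complex.I) - z)).re := by
  set w := Complex.exp (θ * Complex.I) with hw
  have hw1 : w.re ^ 2 + w.im ^ 2 = 1 := by
    have h := Complex.sq_norm w
    rw [abs_w] at h
    simp only [Complex.normSq_apply] at h
    nlinarith [h]
  have hns : Complex.normSq (w - z) ≠ 0 := by
    rw [← Complex.sq_norm]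
    have := w_sub_pos hz θ
    positivity
  rw [pk, Complex.div_re, Complex.sq_norm z, Complex.sq_norm (w - z)]
  field_simp
  simp only [Complex.normSq_apply, Complex.add_re, Complex.add_im, Complex.sub_re,
    Complex.sub_im]
  ring_nf
  nlinarith [hw1]

lemma intC {z : ℂ} (hz : ‖z‖ < 1) :
    ∫ θ in (0:ℝ)..(2*π), ((Complex.exp (θ * Complex.I) + z) / (Complex.exp (θ * Complex.I) - z))
      = (2 * π : ℂ) := by
  have hzb : z ∈ Metric.ball (0:ℂ) 1 := by
    simpa [Metric.mem_ball, Complex.dist_eq] using hz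
  have hA := circleIntegral.integral_sub_inv_of_mem_ball hzb
  simp only [circleIntegral, deriv_circleMap, circleMap, Complex.ofReal_one, one_mul,
    zero_add, smul_eq_mul] at hA
  have key : ∀ θ : ℝ, (Complex.exp (θ * Complex.I) + z) / (Complex.exp (θ * Complex.I) - z)
      = (2 * Complex.I⁻¹) * (Complex.exp (θ * Complex.I) * Complex.I *
          (Complex.exp (θ * Complex.I) - z)⁻¹) - 1 := by
    intro θ
    have h1 := w_sub_ne hz θ
    field_simp
    ring
  rw [intervalIntegral.integral_congr (g := fun θ : ℝ => (2 * Complex.I⁻¹) *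
      (Complex.exp (θ * Complex.I) * Complex.I * (Complex.exp (θ * Complex.I) - z)⁻¹) - 1)
      (fun θ _ => key θ)]
  have hcont : Continuous (fun θ : ℝ => Complex.exp (θ * Complex.I) * Complex.I *
      (Complex.exp (θ * Complex.I) - z)⁻¹) := by
    apply Continuous.mul
    · exact (Complex.continuous_exp.comp (by continuity)).mul continuous_const
    · apply Continuous.inv₀
      · exact (Complex.continuous_exp.comp (by continuity)).sub continuous_const
      · exact fun θ => w_sub_ne hz θ
  rw [intervalIntegral.integral_sub (f := fun θ : ℝ => (2 * Complex.I⁻¹) *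
      (Complex.exp (θ * Complex.I) * Complex.I * (Complex.exp (θ * Complex.I) - z)⁻¹))
    (g := fun _ => (1:ℂ)) (((continuous_const.mul hcont)).intervalIntegrable _ _)
    (intervalIntegrable_const), intervalIntegral.integral_const_mul, hA,
    intervalIntegral.integral_const]
  simp only [sub_zero, smul_eq_mul, mul_one]
  have hI := Complex.I_ne_zero
  field_simp
  rw [Complex.real_smul]; push_cast
  ring

lemma pk_nonneg {z : ℂ} (hz : ‖z‖ < 1) (θ : ℝ) : 0 ≤ pk z θ := by
  have h1 : (0:ℝ) ≤ 1 - ‖z‖ ^ 2 := by nlinarith [norm_nonneg z]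
  exact div_nonneg h1 (sq_nonneg _)

lemma pk_le {z : ℂ} (hz : ‖z‖ < 1) (θ : ℝ) :
    pk z θ ≤ (1 - ‖z‖) ^ (-2 : ℤ) := by
  have h1 : (0:ℝ) ≤ 1 - ‖z‖ ^ 2 := by nlinarith [norm_nonneg z]
  have hlb := w_sub_lb (z := z) θ
  have h2 : (0:ℝ) < 1 - ‖z‖ := by linarith
  rw [zpow_neg, zpow_two]
  calc pk z θ ≤ (1 - ‖z‖ ^ 2) / (1 - ‖z‖) ^ 2 := by
        apply div_le_div_of_nonneg_left h1 (by positivity)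
        exact pow_le_pow_left₀ h2.le hlb 2
    _ ≤ 1 / (1 - ‖z‖) ^ 2 := by
        apply div_le_div_of_nonneg_right ?_ (by positivity)
        nlinarith [norm_nonneg z]
    _ = ((1 - ‖z‖) * (1 - ‖z‖))⁻¹ := by rw [one_div, sq]

lemma contC {z : ℂ} (hz : ‖z‖ < 1) :
    Continuous (fun θ : ℝ =>
      (Complex.exp (θ * Complex.I) + z) / (Complex.exp (θ * Complex.I) - z)) := by
  apply Continuous.div
  · exact (Complex.continuous_exp.comp (by continuity)).add continuous_const
  · exact (Complex.continuous_exp.comp (by continuity)).sub continuous_const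
  · exact w_sub_ne hz

lemma pk_continuous {z : ℂ} (hz : ‖z‖ < 1) : Continuous (pk z) := by
  have h : pk z = fun θ : ℝ =>
      ((Complex.exp (θ * Complex.I) + z) / (Complex.exp (θ * Complex.I) - z)).re :=
    funext (pk_re hz)
  rw [h]
  exact Complex.continuous_re.comp (contC hz)

lemma pk_meas (z : ℂ) : Measurable (pk z) := by
  apply Measurable.div measurable_const
  exact ((continuous_norm.comp
    ((Complex.continuous_exp.comp (by continuity)).sub continuous_const)).pow 2).measurable

lemma pk_int_Ioc {z : ℂ} (hz : ‖z‖ < 1) :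
    ∫ θ in Set.Ioc 0 (2*π), pk z θ = 2*π := by
  have hInt : IntegrableOn (fun θ : ℝ =>
      (Complex.exp (θ * Complex.I) + z) / (Complex.exp (θ * Complex.I) - z))
      (Set.Ioc 0 (2*π)) volume := (contC hz).integrableOn_Ioc
  calc ∫ θ in Set.Ioc 0 (2*π), pk z θ
      = ∫ θ in Set.Ioc 0 (2*π), Complex.reCLM
          ((Complex.exp (θ * Complex.I) + z) / (Complex.exp (θ * Complex.I) - z)) := by
        simp only [Complex.reCLM_apply]
        exact setIntegral_congr_fun measurableSet_Ioc fun θ _ => pk_re hz θ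
    _ = Complex.reCLM (∫ θ in Set.Ioc 0 (2*π),
          (Complex.exp (θ * Complex.I) + z) / (Complex.exp (θ * Complex.I) - z)) :=
        ContinuousLinearMap.integral_comp_comm _ hInt
    _ = 2*π := by
        rw [← intervalIntegral.integral_of_le twopi_pos.le, intC hz]
        simp

lemma pk_integral {z : ℂ} (hz : ‖z‖ < 1) : ∫ θ, pk z θ ∂circleM = 1 := by
  rw [integral_circleM, pk_int_Ioc hz]
  field_simp

lemma pk_contAt (θ : ℝ) {z₀ : ℂ} (hz : ‖z₀‖ < 1) :
    ContinuousAt (fun z => pk z θ) z₀ := by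
  apply ContinuousAt.div
  · exact (continuous_const.sub ((continuous_norm).pow 2)).continuousAt
  · exact ((continuous_norm.comp (continuous_const.sub continuous_id)).pow 2).continuousAt
  · have := w_sub_pos hz θ
    positivity

lemma ball_facts {z₀ z : ℂ} (hz : ‖z₀‖ < 1)
    (h : z ∈ Metric.ball z₀ ((1 - ‖z₀‖)/2)) :
    ‖z‖ < 1 ∧ (1 - ‖z₀‖)/2 ≤ 1 - ‖z‖ := by
  rw [Metric.mem_ball, Complex.dist_eq] at h
  have h2 : ‖z‖ - ‖z₀‖ ≤ ‖z - z₀‖ := by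
    have := norm_sub_norm_le z z₀
    simpa using this
  constructor <;> [skip; skip] <;> nlinarith [norm_nonneg z₀]

lemma pk_bound_of_ball {z₀ z : ℂ} (hz : ‖z₀‖ < 1)
    (h : z ∈ Metric.ball z₀ ((1 - ‖z₀‖)/2)) (θ : ℝ) :
    pk z θ ≤ ((1 - ‖z₀‖)/2) ^ (-2 : ℤ) := by
  obtain ⟨h1, h2⟩ := ball_facts hz h
  have hδ : (0:ℝ) < (1 - ‖z₀‖)/2 := by linarith
  calc pk z θ ≤ (1 - ‖z‖) ^ (-2 : ℤ) := pk_le h1 θ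
    _ ≤ ((1 - ‖z₀‖)/2) ^ (-2 : ℤ) := by
        rw [zpow_neg, zpow_neg]
        apply inv_anti₀ (by positivity)
        exact pow_le_pow_left₀ hδ.le h2 2
  
lemma integrable_pk_mul {z : ℂ} (hz : ‖z‖ < 1) {u : ℝ → ℝ}
    (hu : AEStronglyMeasurable u circleM) {M : ℝ} (hb : ∀ᵐ θ ∂circleM, |u θ| ≤ M) :
    Integrable (fun θ => pk z θ * u θ) circleM := by
  refine ⟨((pk_meas z).aestronglyMeasurable).mul hu,
    HasFiniteIntegral.of_bounded (C := (1 - ‖z‖) ^ (-2 : ℤ) * M) ?_⟩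
  filter_upwards [hb] with θ hθ
  have h0 := pk_nonneg hz θ
  have h1 := pk_le hz θ
  have hM : 0 ≤ M := le_trans (abs_nonneg _) hθ
  calc ‖pk z θ * u θ‖ = pk z θ * |u θ| := by
        rw [norm_mul, Real.norm_eq_abs, Real.norm_eq_abs, _root_.abs_of_nonneg h0]
    _ ≤ (1 - ‖z‖) ^ (-2 : ℤ) * M := by
        apply mul_le_mul h1 hθ (abs_nonneg _) ?_
        have hpos : (0:ℝ) < 1 - ‖z‖ := by linarith
        positivity

lemma integrable_pk (z : ℂ) (hz : ‖z‖ < 1) :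
    Integrable (fun θ => pk z θ) circleM := by
  have := integrable_pk_mul hz (u := fun _ => 1) aestronglyMeasurable_const
    (M := 1) (Filter.Eventually.of_forall fun θ => by norm_num)
  simpa using this

lemma integrable_pk_mulC {z : ℂ} (hz : ‖z‖ < 1) {f : ℝ → ℂ}
    (hf : AEStronglyMeasurable f circleM) {M : ℝ} (hb : ∀ᵐ θ ∂circleM, ‖f θ‖ ≤ M) :
    Integrable (fun θ => (pk z θ : ℂ) * f θ) circleM := by
  refine ⟨(((Complex.continuous_ofReal.measurable).comp (pk_meas z)).aestronglyMeasurable).mul hf,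
    HasFiniteIntegral.of_bounded (C := (1 - ‖z‖) ^ (-2 : ℤ) * M) ?_⟩
  filter_upwards [hb] with θ hθ
  have h0 := pk_nonneg hz θ
  have h1 := pk_le hz θ
  have hM : 0 ≤ M := le_trans (norm_nonneg _) hθ
  calc ‖(pk z θ : ℂ) * f θ‖ = pk z θ * ‖f θ‖ := by
        rw [norm_mul, Complex.norm_real, Real.norm_eq_abs,
          _root_.abs_of_nonneg h0]
    _ ≤ (1 - ‖z‖) ^ (-2 : ℤ) * M := by
        apply mul_le_mul h1 hθ (norm_nonneg _) ?_
        have hpos : (0:ℝ) < 1 - ‖z‖ := by linarith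
        positivity

lemma contP {u : ℝ → ℝ} (hu : AEStronglyMeasurable u circleM)
    (hb : ∀ᵐ θ ∂circleM, |u θ| ≤ 1) {z₀ : ℂ} (hz : ‖z₀‖ < 1) :
    ContinuousAt (fun z => ∫ θ, pk z θ * u θ ∂circleM) z₀ := by
  have hδ : (0:ℝ) < (1 - ‖z₀‖)/2 := by linarith
  apply continuousAt_of_dominated (bound := fun _ => ((1 - ‖z₀‖)/2) ^ (-2 : ℤ))
  · exact Filter.Eventually.of_forall fun z =>
      ((pk_meas z).aestronglyMeasurable).mul hu
  · filter_upwards [Metric.ball_mem_nhds z₀ hδ] with z hzball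
    filter_upwards [hb] with θ hθ
    have h1 := (ball_facts hz hzball).1
    have h0 := pk_nonneg h1 θ
    calc ‖pk z θ * u θ‖ = pk z θ * |u θ| := by
          rw [norm_mul, Real.norm_eq_abs, Real.norm_eq_abs, _root_.abs_of_nonneg h0]
      _ ≤ ((1 - ‖z₀‖)/2) ^ (-2 : ℤ) * 1 :=
          mul_le_mul (pk_bound_of_ball hz hzball θ) hθ (abs_nonneg _) (by positivity)
      _ = _ := mul_one _
  · exact integrable_const _
  · exact Filter.Eventually.of_forall fun θ => (pk_contAt θ hz).mul continuousAt_const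

lemma pk_pos {z : ℂ} (hz : ‖z‖ < 1) (θ : ℝ) : 0 < pk z θ := by
  have h1 : (0:ℝ) < 1 - ‖z‖ ^ 2 := by nlinarith [norm_nonneg z]
  have h2 := w_sub_pos hz θ
  exact div_pos h1 (by positivity)

lemma aux_lt_one {u : ℝ → ℝ} (hu : AEStronglyMeasurable u circleM)
    (h0 : ∀ᵐ θ ∂circleM, 0 ≤ u θ) (h1 : ∀ᵐ θ ∂circleM, u θ ≤ 1)
    (hne : ¬ (u =ᵐ[circleM] fun _ => 1)) {z : ℂ} (hz : ‖z‖ < 1) :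
    ∫ θ, pk z θ * u θ ∂circleM < 1 := by
  have hb : ∀ᵐ θ ∂circleM, |u θ| ≤ 1 := by
    filter_upwards [h0, h1] with θ a b
    rw [_root_.abs_of_nonneg a]; exact b
  have hint : Integrable (fun θ => pk z θ * u θ) circleM := integrable_pk_mul hz hu hb
  have hintq : Integrable (fun θ => pk z θ * (1 - u θ)) circleM := by
    have h := (integrable_pk z hz).sub hint
    apply h.congr
    filter_upwards with θ
    simp [Pi.sub_apply]
    ring
  have hq0 : 0 ≤ᵐ[circleM] fun θ => pk z θ * (1 - u θ) := by
    filter_upwards [h1] with θ hθ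
    exact mul_nonneg (pk_nonneg hz θ) (by linarith)
  have hqpos : 0 < ∫ θ, pk z θ * (1 - u θ) ∂circleM := by
    rcases (integral_nonneg_of_ae hq0).lt_or_eq with h | h
    · exact h
    · exfalso
      have hq := (integral_eq_zero_iff_of_nonneg_ae hq0 hintq).mp h.symm
      apply hne
      filter_upwards [hq] with θ hθ
      have hpk : 0 < pk z θ := pk_pos hz θ
      have hθ' : pk z θ * (1 - u θ) = 0 := hθ
      rcases mul_eq_zero.mp hθ' with h' | h'
      · exact absurd h' (ne_of_gt hpk)
      · show u θ = 1; linarith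
  have hsplit : ∫ θ, pk z θ * (1 - u θ) ∂circleM
      = 1 - ∫ θ, pk z θ * u θ ∂circleM := by
    rw [show (fun θ => pk z θ * (1 - u θ)) = fun θ => pk z θ - pk z θ * u θ by
        funext θ; ring,
      integral_sub (integrable_pk z hz) hint, pk_integral hz]
  linarith [hsplit ▸ hqpos]

lemma escape (q : ℂ → ℝ) (zs : ℕ → ℂ) (hzs : ∀ n, ‖zs n‖ < 1)
    (hcont : ∀ z : ℂ, ‖z‖ < 1 → ContinuousAt q z)
    (hlt : ∀ z : ℂ, ‖z‖ < 1 → q z < 1)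
    (ht : Tendsto (fun n => q (zs n)) atTop (nhds 1)) :
    ∀ r < (1:ℝ), ∀ᶠ n in atTop, r < ‖zs n‖ := by
  intro r hr
  by_contra hcon
  rw [Filter.not_eventually] at hcon
  have hcon' : ∃ᶠ n in atTop, ‖zs n‖ ≤ r := hcon.mono fun n h => not_lt.mp h
  obtain ⟨φ, hφ, hφr⟩ := Filter.extraction_of_frequently_atTop hcon'
  have hK : IsCompact (Metric.closedBall (0:ℂ) r) := isCompact_closedBall _ _
  have hmem : ∀ k, (fun k => zs (φ k)) k ∈ Metric.closedBall (0:ℂ) r := fun k => by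
    simpa [Metric.mem_closedBall, Complex.dist_eq] using hφr k
  obtain ⟨z₀, hz₀, ψ, hψ, hconv⟩ := hK.tendsto_subseq hmem
  have hz₀1 : ‖z₀‖ < 1 := by
    have : ‖z₀‖ ≤ r := by
      simpa [Metric.mem_closedBall, Complex.dist_eq] using hz₀
    linarith
  have h1 : Tendsto (fun k => q (zs (φ (ψ k)))) atTop (𝓝 (q z₀)) :=
    (hcont z₀ hz₀1).tendsto.comp hconv
  have h2 : Tendsto (fun k => q (zs (φ (ψ k)))) atTop (𝓝 1) :=
    ht.comp ((hφ.comp hψ).tendsto_atTop)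
  have heq := tendsto_nhds_unique h1 h2
  exact absurd (heq ▸ hlt z₀ hz₀1) (lt_irrefl 1)


/-- Let F be an outer function in QA with ‖F‖_∞ = 1 and |F|
nonconstant on 𝕋, and let I be inner. Then IF is G-extremal (equivalently,
‖IF‖_G = 1) iff there is a sequence {z_n} ⊂ 𝔻 with |F(z_n)| → 1 and
I(z_n) → 0. -/
theorem G_extremal_inner_times_QA_outer
    (Fa : ℂ → ℂ) (Fb : ℝ → ℂ) (Ia : ℂ → ℂ) (Ib : ℝ → ℂ)
    (hFinf : MemLp Fb ⊤ circleM)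
    (hFnorm : eLpNorm Fb ⊤ circleM = 1)
    (hFanal : DifferentiableOn ℂ Fa unitDisk)
    (hFrec : ∀ z ∈ unitDisk, poissonInt Fb z = Fa z)
    (hFouter : ∀ z ∈ unitDisk, ‖Fa z‖ =
      Real.exp (poissonIntR (fun θ => Real.log (‖Fb θ‖)) z))
    (hFvmo : ∀ ε > (0 : ℝ), ∃ r ∈ Set.Ico (0 : ℝ) 1,
      ∀ z ∈ unitDisk, r < ‖z‖ → Phi Fb z < ε)
    (hFnoncst : ¬ ∃ c : ℝ, ∀ᵐ θ ∂circleM, ‖Fb θ‖ = c)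
    (hIanal : DifferentiableOn ℂ Ia unitDisk)
    (hIbdd : ∃ C : ℝ, ∀ z ∈ unitDisk, ‖Ia z‖ ≤ C)
    (hIuni : ∀ᵐ θ ∂circleM, ‖Ib θ‖ = 1)
    (hIrec : ∀ z ∈ unitDisk, poissonInt Ib z = Ia z)
    (hProdrec : ∀ z ∈ unitDisk,
      poissonInt (fun θ => Ib θ * Fb θ) z = Ia z * Fa z) :
    (garsiaNorm (fun θ => Ib θ * Fb θ) =
        eLpNorm (fun θ => Ib θ * Fb θ) ⊤ circleM) ↔
      ∃ zs : ℕ → ℂ, (∀ n, zs n ∈ unitDisk) ∧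
        Tendsto (fun n => ‖Fa (zs n)‖) atTop (nhds 1) ∧
        Tendsto (fun n => Ia (zs n)) atTop (nhds 0) := by
  classical
  -- Abbreviations
  have hD : ∀ z : ℂ, z ∈ unitDisk ↔ ‖z‖ < 1 := by
    intro z
    rw [unitDisk, Metric.mem_ball, Complex.dist_eq, sub_zero]
  have hFb_meas : AEStronglyMeasurable Fb circleM := hFinf.1
  -- |Fb| ≤ 1 a.e.
  have hFb_le : ∀ᵐ θ ∂circleM, ‖Fb θ‖ ≤ 1 := by
    have h := enorm_ae_le_eLpNormEssSup Fb circleM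
    rw [← eLpNorm_exponent_top, hFnorm] at h
    filter_upwards [h] with θ hθ
    have h1 : ‖Fb θ‖₊ ≤ 1 := ENNReal.coe_le_one_iff.mp hθ
    have h2 : ‖Fb θ‖ ≤ 1 := h1
    exact h2
  have hFb1_meas : AEStronglyMeasurable (fun θ => ‖Fb θ‖) circleM := by
    have := hFb_meas.norm
    simpa using this
  have hFb2_meas : AEStronglyMeasurable (fun θ => ‖Fb θ‖ ^ 2) circleM := by
    have := hFb1_meas.mul hFb1_meas
    apply this.congr
    filter_upwards with θ
    simp [Pi.mul_apply, sq]
  have hFb1_le : ∀ᵐ θ ∂circleM, |‖Fb θ‖| ≤ 1 := by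
    filter_upwards [hFb_le] with θ hθ
    rwa [_root_.abs_of_nonneg (norm_nonneg _)]
  have hFb2_le : ∀ᵐ θ ∂circleM, |‖Fb θ‖ ^ 2| ≤ 1 := by
    filter_upwards [hFb_le] with θ hθ
    rw [_root_.abs_of_nonneg (sq_nonneg _)]
    nlinarith [norm_nonneg (Fb θ)]
  -- the sup norm of Ib * Fb is 1
  have hRHS : eLpNorm (fun θ => Ib θ * Fb θ) ⊤ circleM = 1 := by
    rw [eLpNorm_exponent_top] at hFnorm ⊢
    rw [← hFnorm]
    have hae : (fun θ => (‖Ib θ * Fb θ‖₊ : ℝ≥0∞)) =ᵐ[circleM]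
        (fun θ => (‖Fb θ‖₊ : ℝ≥0∞)) := by
      filter_upwards [hIuni] with θ hθ
      have h1 : ‖Ib θ‖₊ = 1 := by
        apply NNReal.coe_injective
        simp [coe_nnnorm, hθ]
      simp [nnnorm_mul, h1]
    exact essSup_congr_ae hae
  -- key integral quantities
  set g : ℂ → ℝ := fun z => ∫ θ, pk z θ * ‖Fb θ‖ ∂circleM with hg_def
  set h : ℂ → ℝ := fun z => ∫ θ, pk z θ * ‖Fb θ‖ ^ 2 ∂circleM with hh_def
  have hg_le : ∀ z : ℂ, ‖z‖ < 1 → g z ≤ 1 := by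
    intro z hz
    rw [← pk_integral hz]
    apply integral_mono_ae (integrable_pk_mul hz hFb1_meas hFb1_le) (integrable_pk z hz)
    filter_upwards [hFb_le] with θ hθ
    calc pk z θ * ‖Fb θ‖ ≤ pk z θ * 1 :=
          mul_le_mul_of_nonneg_left hθ (pk_nonneg hz θ)
      _ = pk z θ := mul_one _
  have hh_le : ∀ z : ℂ, ‖z‖ < 1 → h z ≤ 1 := by
    intro z hz
    rw [← pk_integral hz]
    apply integral_mono_ae (integrable_pk_mul hz hFb2_meas hFb2_le) (integrable_pk z hz)
    filter_upwards [hFb_le] with θ hθ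
    calc pk z θ * ‖Fb θ‖ ^ 2 ≤ pk z θ * 1 := by
          apply mul_le_mul_of_nonneg_left ?_ (pk_nonneg hz θ)
          nlinarith [norm_nonneg (Fb θ)]
      _ = pk z θ := mul_one _
  have hFa_le_g : ∀ z : ℂ, ‖z‖ < 1 → ‖Fa z‖ ≤ g z := by
    intro z hz
    rw [← hFrec z ((hD z).mpr hz)]
    calc ‖poissonInt Fb z‖ = ‖∫ θ, (pk z θ : ℂ) * Fb θ ∂circleM‖ := by
          rw [poissonInt]
      _ ≤ ∫ θ, ‖(pk z θ : ℂ) * Fb θ‖ ∂circleM := norm_integral_le_integral_norm _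
      _ = g z := by
          apply integral_congr_ae
          filter_upwards with θ
          rw [norm_mul, Complex.norm_real, Real.norm_eq_abs,
            _root_.abs_of_nonneg (pk_nonneg hz θ)]
  have hFa_le : ∀ z : ℂ, ‖z‖ < 1 → ‖Fa z‖ ≤ 1 :=
    fun z hz => (hFa_le_g z hz).trans (hg_le z hz)
  have hIa_le : ∀ z : ℂ, ‖z‖ < 1 → ‖Ia z‖ ≤ 1 := by
    intro z hz
    rw [← hIrec z ((hD z).mpr hz)]
    calc ‖poissonInt Ib z‖ = ‖∫ θ, (pk z θ : ℂ) * Ib θ ∂circleM‖ := by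
          rw [poissonInt]
      _ ≤ ∫ θ, ‖(pk z θ : ℂ) * Ib θ‖ ∂circleM := norm_integral_le_integral_norm _
      _ = ∫ θ, pk z θ ∂circleM := by
          apply integral_congr_ae
          filter_upwards [hIuni] with θ hθ
          rw [norm_mul, Complex.norm_real, Real.norm_eq_abs, hθ,
            mul_one, _root_.abs_of_nonneg (pk_nonneg hz θ)]
      _ = 1 := pk_integral hz
  -- 2 g z - 1 ≤ h z
  have h2g : ∀ z : ℂ, ‖z‖ < 1 → 2 * g z - 1 ≤ h z := by
    intro z hz
    have hintg := integrable_pk_mul hz hFb1_meas hFb1_le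
    have hinth := integrable_pk_mul hz hFb2_meas hFb2_le
    have hlhs : Integrable (fun θ => 2 * (pk z θ * ‖Fb θ‖) - pk z θ) circleM :=
      (hintg.const_mul 2).sub (integrable_pk z hz)
    have hmono := integral_mono_ae hlhs hinth (by
      filter_upwards with θ
      nlinarith [pk_nonneg hz θ, sq_nonneg (‖Fb θ‖ - 1)])
    rwa [integral_sub (hintg.const_mul 2) (integrable_pk z hz), integral_const_mul,
      pk_integral hz] at hmono
  -- strict bounds
  have hne1 : ¬ ((fun θ => ‖Fb θ‖) =ᵐ[circleM] fun _ => 1) := by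
    intro hcon
    exact hFnoncst ⟨1, hcon⟩
  have hne2 : ¬ ((fun θ => ‖Fb θ‖ ^ 2) =ᵐ[circleM] fun _ => 1) := by
    intro hcon
    apply hne1
    filter_upwards [hcon] with θ hθ
    have h1 : ‖Fb θ‖ ^ 2 = 1 := hθ
    nlinarith [norm_nonneg (Fb θ)]
  have hFb1_ae0 : ∀ᵐ θ ∂circleM, 0 ≤ ‖Fb θ‖ :=
    Filter.Eventually.of_forall fun θ => norm_nonneg _
  have hFb2_ae0 : ∀ᵐ θ ∂circleM, 0 ≤ ‖Fb θ‖ ^ 2 :=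
    Filter.Eventually.of_forall fun θ => sq_nonneg _
  have hFb1_ae1 : ∀ᵐ θ ∂circleM, ‖Fb θ‖ ≤ 1 := hFb_le
  have hFb2_ae1 : ∀ᵐ θ ∂circleM, ‖Fb θ‖ ^ 2 ≤ 1 := by
    filter_upwards [hFb_le] with θ hθ
    nlinarith [norm_nonneg (Fb θ)]
  have hg_lt : ∀ z : ℂ, ‖z‖ < 1 → g z < 1 := fun z hz =>
    aux_lt_one hFb1_meas hFb1_ae0 hFb1_ae1 hne1 hz
  have hh_lt : ∀ z : ℂ, ‖z‖ < 1 → h z < 1 := fun z hz =>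
    aux_lt_one hFb2_meas hFb2_ae0 hFb2_ae1 hne2 hz
  have hg_cont : ∀ z : ℂ, ‖z‖ < 1 → ContinuousAt g z := fun z hz =>
    contP hFb1_meas hFb1_le hz
  have hh_cont : ∀ z : ℂ, ‖z‖ < 1 → ContinuousAt h z := fun z hz =>
    contP hFb2_meas hFb2_le hz
  -- Phi decompositions
  have hPhiIF : ∀ z : ℂ, ‖z‖ < 1 →
      Phi (fun θ => Ib θ * Fb θ) z
        = h z - ‖Ia z‖ ^ 2 * ‖Fa z‖ ^ 2 := by
    intro z hz
    rw [Phi, hProdrec z ((hD z).mpr hz)]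
    congr 1
    · apply integral_congr_ae
      filter_upwards [hIuni] with θ hθ
      rw [norm_mul, hθ, one_mul]
    · rw [norm_mul]; ring
  have hPhiF : ∀ z : ℂ, ‖z‖ < 1 →
      Phi Fb z = h z - ‖Fa z‖ ^ 2 := by
    intro z hz
    rw [Phi, hFrec z ((hD z).mpr hz)]
  have hPhiIF_le_h : ∀ z : ℂ, ‖z‖ < 1 →
      Phi (fun θ => Ib θ * Fb θ) z ≤ h z := by
    intro z hz
    rw [hPhiIF z hz]
    nlinarith [sq_nonneg (‖Ia z‖), sq_nonneg (‖Fa z‖)]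
  have hPhiIF_le1 : ∀ z : ℂ, ‖z‖ < 1 →
      Phi (fun θ => Ib θ * Fb θ) z ≤ 1 :=
    fun z hz => (hPhiIF_le_h z hz).trans (hh_le z hz)
  rw [hRHS]
  constructor
  · -- forward direction
    intro hsup
    -- extract a sequence with Phi → 1
    have H : ∀ n : ℕ, ∃ z : ℂ, ‖z‖ < 1 ∧
        1 - 1/((n:ℝ)+1) < Phi (fun θ => Ib θ * Fb θ) z := by
      intro n
      set c : ℝ := 1 - 1/((n:ℝ)+1) with hc_def
      have hn1 : (0:ℝ) < (n:ℝ)+1 := by positivity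
      have hc0 : 0 ≤ c := by
        rw [hc_def, sub_nonneg, div_le_one hn1]
        linarith [Nat.cast_nonneg (α := ℝ) n]
      have hc1 : c < 1 := by
        rw [hc_def]
        have : 0 < 1/((n:ℝ)+1) := by positivity
        linarith
      have hlt : ENNReal.ofReal (Real.sqrt c) < garsiaNorm (fun θ => Ib θ * Fb θ) := by
        rw [hsup, ← ENNReal.ofReal_one]
        rw [ENNReal.ofReal_lt_ofReal_iff_of_nonneg (Real.sqrt_nonneg c)]
        calc Real.sqrt c < Real.sqrt 1 := Real.sqrt_lt_sqrt hc0 hc1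
          _ = 1 := Real.sqrt_one
      rw [garsiaNorm, lt_iSup_iff] at hlt
      obtain ⟨⟨z, hzmem⟩, hz⟩ := hlt
      refine ⟨z, (hD z).mp hzmem, ?_⟩
      have h1 : Real.sqrt c < Real.sqrt (Phi (fun θ => Ib θ * Fb θ) z) :=
        (ENNReal.ofReal_lt_ofReal_iff_of_nonneg (Real.sqrt_nonneg c)).mp hz
      have h2 := (Real.lt_sqrt (Real.sqrt_nonneg c)).mp h1
      rwa [Real.sq_sqrt hc0] at h2
    choose zs hzs1 hzs2 using H
    -- Phi (Ib Fb) (zs n) → 1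
    have hlow : Tendsto (fun n : ℕ => 1 - 1/((n:ℝ)+1)) atTop (𝓝 1) := by
      have := (tendsto_const_nhds : Tendsto (fun _ : ℕ => (1:ℝ)) atTop (𝓝 1)).sub
        tendsto_one_div_add_atTop_nhds_zero_nat
      simpa using this
    have hPhit : Tendsto (fun n => Phi (fun θ => Ib θ * Fb θ) (zs n)) atTop (𝓝 1) := by
      apply tendsto_of_tendsto_of_tendsto_of_le_of_le' hlow tendsto_const_nhds
      · filter_upwards with n
        exact (hzs2 n).le
      · filter_upwards with n
        exact hPhiIF_le1 (zs n) (hzs1 n)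
    -- h (zs n) → 1
    have hht : Tendsto (fun n => h (zs n)) atTop (𝓝 1) := by
      apply tendsto_of_tendsto_of_tendsto_of_le_of_le' hPhit tendsto_const_nhds
      · filter_upwards with n
        exact hPhiIF_le_h (zs n) (hzs1 n)
      · filter_upwards with n
        exact (hh_le (zs n) (hzs1 n))
    -- escape to the boundary
    have hesc := escape h zs hzs1 hh_cont hh_lt hht
    -- t n := |Fa|²(1-|Ia|²) → 1
    set tFa : ℕ → ℝ := fun n => ‖Fa (zs n)‖ with htFa_def
    set tIa : ℕ → ℝ := fun n => ‖Ia (zs n)‖ with htIa_def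
    set t : ℕ → ℝ := fun n => tFa n ^ 2 * (1 - tIa n ^ 2) with ht_def
    have htdiff : ∀ n, t n = Phi (fun θ => Ib θ * Fb θ) (zs n) - Phi Fb (zs n) := by
      intro n
      rw [ht_def, hPhiIF (zs n) (hzs1 n), hPhiF (zs n) (hzs1 n)]
      simp only [htFa_def, htIa_def]
      ring
    have ht_le1 : ∀ n, t n ≤ 1 := by
      intro n
      have h1 := hFa_le (zs n) (hzs1 n)
      have h2 := hIa_le (zs n) (hzs1 n)
      have h3 := norm_nonneg (Fa (zs n))
      have h4 := norm_nonneg (Ia (zs n))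
      rw [ht_def]
      simp only [htFa_def, htIa_def]
      nlinarith
    have ht1 : Tendsto t atTop (𝓝 1) := by
      rw [NormedAddCommGroup.tendsto_atTop]
      intro ε hε
      obtain ⟨r, hrIco, hvmo⟩ := hFvmo (ε/2) (by linarith)
      have h1 := hesc r hrIco.2
      have h2 : ∀ᶠ n in atTop, 1 - ε/2 < Phi (fun θ => Ib θ * Fb θ) (zs n) :=
        hPhit.eventually (eventually_gt_nhds (by linarith))
      obtain ⟨N, hN⟩ := eventually_atTop.mp (h1.and h2)
      refine ⟨N, fun n hn => ?_⟩
      obtain ⟨ha, hb⟩ := hN n hn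
      have hPhiFb : Phi Fb (zs n) < ε/2 := hvmo (zs n) ((hD _).mpr (hzs1 n)) ha
      have h3 : 1 - ε < t n := by
        rw [htdiff n]
        linarith
      have h4 := ht_le1 n
      rw [Real.norm_eq_abs, abs_lt]
      constructor <;> linarith
    -- |Fa (zs n)|² → 1
    have hFa2 : Tendsto (fun n => tFa n ^ 2) atTop (𝓝 1) := by
      apply tendsto_of_tendsto_of_tendsto_of_le_of_le' ht1 tendsto_const_nhds
      · filter_upwards with n
        have h4 := norm_nonneg (Ia (zs n))
        have h2 := hIa_le (zs n) (hzs1 n)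
        rw [ht_def]
        simp only [htFa_def, htIa_def]
        nlinarith [sq_nonneg (‖Fa (zs n)‖)]
      · filter_upwards with n
        have h1 := hFa_le (zs n) (hzs1 n)
        have h3 := norm_nonneg (Fa (zs n))
        nlinarith
    have hFa1 : Tendsto (fun n => ‖Fa (zs n)‖) atTop (𝓝 1) := by
      have hc : Tendsto (fun n => Real.sqrt (tFa n ^ 2)) atTop (𝓝 (Real.sqrt 1)) :=
        (Real.continuous_sqrt.tendsto 1).comp hFa2
      have heq : (fun n => Real.sqrt (tFa n ^ 2)) = fun n => ‖Fa (zs n)‖ := by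
        funext n
        simp only [htFa_def]
        rw [Real.sqrt_sq (norm_nonneg _)]
      rwa [heq, Real.sqrt_one] at hc
    -- |Ia (zs n)|² → 0
    have hIa2 : Tendsto (fun n => tIa n ^ 2) atTop (𝓝 0) := by
      have hup : Tendsto (fun n => 1 - t n) atTop (𝓝 0) := by
        have := (tendsto_const_nhds : Tendsto (fun _ : ℕ => (1:ℝ)) atTop (𝓝 1)).sub ht1
        simpa using this
      apply tendsto_of_tendsto_of_tendsto_of_le_of_le' tendsto_const_nhds hup
      · filter_upwards with n
        exact sq_nonneg _
      · filter_upwards with n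
        have h1 := hFa_le (zs n) (hzs1 n)
        have h2 := hIa_le (zs n) (hzs1 n)
        have h3 := norm_nonneg (Fa (zs n))
        have h4 := norm_nonneg (Ia (zs n))
        rw [ht_def]
        simp only [htFa_def, htIa_def]
        have e1 : 0 ≤ 1 - ‖Fa (zs n)‖ ^ 2 := by nlinarith
        have e2 : 0 ≤ 1 - ‖Ia (zs n)‖ ^ 2 := by nlinarith
        nlinarith [mul_nonneg e1 e2]
    have hIa0 : Tendsto (fun n => Ia (zs n)) atTop (𝓝 0) := by
      rw [tendsto_zero_iff_norm_tendsto_zero]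
      have hc : Tendsto (fun n => Real.sqrt (tIa n ^ 2)) atTop (𝓝 (Real.sqrt 0)) :=
        (Real.continuous_sqrt.tendsto 0).comp hIa2
      have heq : (fun n => Real.sqrt (tIa n ^ 2)) = fun n => ‖Ia (zs n)‖ := by
        funext n
        simp only [htIa_def]
        rw [Real.sqrt_sq (norm_nonneg _)]
      rwa [heq, Real.sqrt_zero] at hc
    exact ⟨zs, fun n => (hD _).mpr (hzs1 n), hFa1, hIa0⟩
  · -- reverse direction
    rintro ⟨zs, hmem, hFa1, hIa0⟩
    have hzs1 : ∀ n, ‖zs n‖ < 1 := fun n => (hD _).mp (hmem n)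
    have htIa : Tendsto (fun n => ‖Ia (zs n)‖) atTop (𝓝 0) := by
      have hc : Tendsto (fun n => ‖Ia (zs n)‖) atTop (𝓝 0) :=
        tendsto_zero_iff_norm_tendsto_zero.mp hIa0
      simpa using hc
    -- g (zs n) → 1
    have hgt : Tendsto (fun n => g (zs n)) atTop (𝓝 1) := by
      apply tendsto_of_tendsto_of_tendsto_of_le_of_le' hFa1 tendsto_const_nhds
      · filter_upwards with n
        exact hFa_le_g (zs n) (hzs1 n)
      · filter_upwards with n
        exact hg_le (zs n) (hzs1 n)
    -- h (zs n) → 1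
    have hht : Tendsto (fun n => h (zs n)) atTop (𝓝 1) := by
      have hlow : Tendsto (fun n => 2 * g (zs n) - 1) atTop (𝓝 1) := by
        have h0 := (hgt.const_mul 2).sub (tendsto_const_nhds : Tendsto (fun _ : ℕ => (1:ℝ)) atTop (𝓝 1))
        have h21 : 𝓝 ((2:ℝ) * 1 - 1) = 𝓝 1 := by norm_num
        rw [h21] at h0
        exact h0
      apply tendsto_of_tendsto_of_tendsto_of_le_of_le' hlow tendsto_const_nhds
      · filter_upwards with n
        exact h2g (zs n) (hzs1 n)
      · filter_upwards with n
        exact hh_le (zs n) (hzs1 n)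
    -- |Ia Fa|² → 0
    have hprod : Tendsto (fun n => ‖Ia (zs n)‖ ^ 2
        * ‖Fa (zs n)‖ ^ 2) atTop (𝓝 0) := by
      have hIa2 : Tendsto (fun n => ‖Ia (zs n)‖ ^ 2) atTop (𝓝 0) := by
        have := htIa.mul htIa
        simpa [sq] using this
      apply tendsto_of_tendsto_of_tendsto_of_le_of_le' tendsto_const_nhds hIa2
      · filter_upwards with n
        positivity
      · filter_upwards with n
        have h1 := hFa_le (zs n) (hzs1 n)
        have h3 := norm_nonneg (Fa (zs n))
        have e1 : 0 ≤ 1 - ‖Fa (zs n)‖ ^ 2 := by nlinarith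
        nlinarith [mul_nonneg (sq_nonneg (‖Ia (zs n)‖)) e1]
    -- Phi (Ib Fb) (zs n) → 1
    have hPhit : Tendsto (fun n => Phi (fun θ => Ib θ * Fb θ) (zs n)) atTop (𝓝 1) := by
      have heq : (fun n => Phi (fun θ => Ib θ * Fb θ) (zs n))
          = fun n => h (zs n) - ‖Ia (zs n)‖ ^ 2 * ‖Fa (zs n)‖ ^ 2 := by
        funext n
        exact hPhiIF (zs n) (hzs1 n)
      rw [heq]
      have := hht.sub hprod
      simpa using this
    -- conclude
    apply le_antisymm
    · rw [garsiaNorm]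
      apply iSup_le
      rintro ⟨z, hzmem⟩
      rw [ENNReal.ofReal_le_one]
      exact Real.sqrt_le_one.mpr (hPhiIF_le1 z ((hD z).mp hzmem))
    · have hc : Tendsto (fun n => ENNReal.ofReal
          (Real.sqrt (Phi (fun θ => Ib θ * Fb θ) (zs n)))) atTop (𝓝 1) := by
        have h1 : Tendsto (fun n => Real.sqrt (Phi (fun θ => Ib θ * Fb θ) (zs n)))
            atTop (𝓝 1) := by
          have := (Real.continuous_sqrt.tendsto 1).comp hPhit
          simpa [Function.comp_def, Real.sqrt_one] using this
        have := ENNReal.tendsto_ofReal h1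
        simpa [ENNReal.ofReal_one] using this
      apply le_of_tendsto hc
      filter_upwards with n
      exact le_iSup (fun z : unitDisk => ENNReal.ofReal
        (Real.sqrt (Phi (fun θ => Ib θ * Fb θ) (z : ℂ)))) ⟨zs n, hmem n⟩
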